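/- arXiv:2204.12931 — 2 statements merged into one kernel-verified Lean document; each statement's English description precedes it below -/
import Mathlib

section
/- In independent bond percolation on the bunkbed graph G±, for vertices v, w ∈ V, the signed sum d := P(v₊↔w₊) + P(v₋↔w₋) − P(v₊↔w₋) − P(v₋↔w₊) equals P(v₋ ̸↔ v₊ ↔ w₊ ̸↔ w₋) + P(v₊ ̸↔ v₋ ↔ w₋ ̸↔ w₊) − P(v₋ ̸↔ v₊ ↔ w₋ ̸↔ w₊) − P(v₊ ̸↔ v₋ ↔ w₊ ̸↔ w₋), where e.g. {v₋ ̸↔ v₊ ↔ w₊ ̸↔ w₋} denotes the event that v₊ ↔ w₊ but v₋ is not connected to v₊ and w₋ is not connected to w₊. -/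
open Finset

/-- The bunkbed graph of `G`: two copies of `G` (layers `false` = minus, `true` = plus)
plus vertical edges between the copies of each vertex. -/
def bunkbed {V : Type*} (G : SimpleGraph V) : SimpleGraph (V × Bool) where
  Adj x y := (x.2 = y.2 ∧ G.Adj x.1 y.1) ∨ (x.1 = y.1 ∧ x.2 ≠ y.2)
  symm := ⟨by
    rintro ⟨u, s⟩ ⟨v, t⟩ (⟨h1, h2⟩ | ⟨h1, h2⟩)
    · exact Or.inl ⟨h1.symm, h2.symm⟩
    · exact Or.inr ⟨h1.symm, h2.symm⟩⟩
  loopless := ⟨by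
    rintro ⟨u, s⟩ (⟨_, h⟩ | ⟨_, h⟩) <;> simp_all⟩

/-- The random subgraph of the bunkbed graph given by a percolation configuration `ω`. -/
def openSub {V : Type*} (G : SimpleGraph V) (ω : Sym2 (V × Bool) → Bool) :
    SimpleGraph (V × Bool) where
  Adj x y := (bunkbed G).Adj x y ∧ ω s(x, y) = true
  symm := ⟨by
    intro x y h
    exact ⟨(bunkbed G).adj_symm h.1, by rw [Sym2.eq_swap]; exact h.2⟩⟩
  loopless := ⟨fun x h => (bunkbed G).irrefl h.1⟩

/-- `x` and `y` are connected by a path of open edges in configuration `ω`. -/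
def Conn {V : Type*} (G : SimpleGraph V) (ω : Sym2 (V × Bool) → Bool) (x y : V × Bool) : Prop :=
  (openSub G ω).Reachable x y

/-- The probability weight of a configuration under independent bond percolation with
edge probabilities `p`. -/
noncomputable def wt {V : Type*} [Fintype V] [DecidableEq V] (p : Sym2 (V × Bool) → ℝ)
    (ω : Sym2 (V × Bool) → Bool) : ℝ :=
  ∏ e : Sym2 (V × Bool), if ω e then p e else 1 - p e

open Classical in
/-- Probability of the event `A` under independent bond percolation with edge probabilities `p`. -/
noncomputable def prob {V : Type*} [Fintype V] [DecidableEq V] (p : Sym2 (V × Bool) → ℝ)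
    (A : (Sym2 (V × Bool) → Bool) → Prop) : ℝ :=
  ∑ ω : Sym2 (V × Bool) → Bool, if A ω then wt p ω else 0

/-- Edge probabilities on the bunkbed graph built from horizontal weights `pE` (the same in
both layers) and vertical weights `pV`. -/
noncomputable def edgeProb {V : Type*} [DecidableEq V] (pE : Sym2 V → ℝ) (pV : V → ℝ) :
    Sym2 (V × Bool) → ℝ :=
  Sym2.lift ⟨fun x y => if x.1 = y.1 then pV x.1 else if x.2 = y.2 then pE s(x.1, y.1) else 0, by
    intro x y
    beta_reduce
    by_cases h : x.1 = y.1
    · rw [if_pos h, if_pos h.symm, h]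
    · have h' : y.1 ≠ x.1 := fun e => h e.symm
      rw [if_neg h, if_neg h']
      by_cases h2 : x.2 = y.2
      · rw [if_pos h2, if_pos h2.symm, Sym2.eq_swap]
      · rw [if_neg h2, if_neg (fun e => h2 (Eq.symm e))]⟩

/-!
The identity holds configuration by configuration. Identify connectivity with equality of
connected components. If `v₊ ↔ v₋` or `w₊ ↔ w₋`, the four connection events on the left pair up
and cancel, and every event on the right is empty; otherwise each event on the left coincides
with the corresponding event on the right.
-/

theorem signed_sum_boole_eq {β R : Type*} [AddCommGroupWithOne R] [DecidableEq β] (a b c d : β) :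
    ((if a = c then 1 else 0) + (if b = d then 1 else 0) - (if a = d then 1 else 0) -
        (if b = c then 1 else 0) : R) =
      (if a = c ∧ b ≠ a ∧ c ≠ d then 1 else 0) + (if b = d ∧ a ≠ b ∧ d ≠ c then 1 else 0) -
        (if a = d ∧ b ≠ a ∧ d ≠ c then 1 else 0) - (if b = c ∧ a ≠ b ∧ c ≠ d then 1 else 0) := by
  by_cases hab : a = b <;> by_cases hcd : c = d <;> simp_all [eq_comm]

open Classical in
theorem prob_eq_sum_boole_mul {V : Type*} [Fintype V] [DecidableEq V] (p : Sym2 (V × Bool) → ℝ)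
    (A : (Sym2 (V × Bool) → Bool) → Prop) :
    prob p A = ∑ ω, (if A ω then 1 else 0) * wt p ω := by
  simp only [prob, boole_mul]

theorem conn_iff_connectedComponentMk_eq {V : Type*} (G : SimpleGraph V)
    (ω : Sym2 (V × Bool) → Bool) (x y : V × Bool) :
    Conn G ω x y ↔ (openSub G ω).connectedComponentMk x = (openSub G ω).connectedComponentMk y :=
  SimpleGraph.ConnectedComponent.eq.symm

theorem signed_sum_decomposition_general {V : Type*} [Fintype V] [DecidableEq V] (G : SimpleGraph V)
    (p : Sym2 (V × Bool) → ℝ) (v w : V) :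
    prob p (fun ω => Conn G ω (v, true) (w, true)) +
        prob p (fun ω => Conn G ω (v, false) (w, false)) -
        prob p (fun ω => Conn G ω (v, true) (w, false)) -
        prob p (fun ω => Conn G ω (v, false) (w, true)) =
      prob p (fun ω => Conn G ω (v, true) (w, true) ∧
          ¬ Conn G ω (v, false) (v, true) ∧ ¬ Conn G ω (w, true) (w, false)) +
        prob p (fun ω => Conn G ω (v, false) (w, false) ∧
          ¬ Conn G ω (v, true) (v, false) ∧ ¬ Conn G ω (w, false) (w, true)) -
        prob p (fun ω => Conn G ω (v, true) (w, false) ∧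
          ¬ Conn G ω (v, false) (v, true) ∧ ¬ Conn G ω (w, false) (w, true)) -
        prob p (fun ω => Conn G ω (v, false) (w, true) ∧
          ¬ Conn G ω (v, true) (v, false) ∧ ¬ Conn G ω (w, true) (w, false)) := by
  classical
  simp only [prob_eq_sum_boole_mul, ← sum_add_distrib, ← sum_sub_distrib, ← add_mul, ← sub_mul]
  refine sum_congr rfl fun ω _ => congrArg (· * wt p ω) ?_
  simp only [conn_iff_connectedComponentMk_eq]
  exact signed_sum_boole_eq _ _ _ _

/-- decomposition of the signed sum of connection probabilities. -/
theorem signed_sum_decomposition {V : Type*} [Fintype V] [DecidableEq V] (G : SimpleGraph V)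
    (p : Sym2 (V × Bool) → ℝ) (hp : ∀ e, p e ∈ Set.Icc (0:ℝ) 1) (v w : V) :
    prob p (fun ω => Conn G ω (v, true) (w, true)) +
        prob p (fun ω => Conn G ω (v, false) (w, false)) -
        prob p (fun ω => Conn G ω (v, true) (w, false)) -
        prob p (fun ω => Conn G ω (v, false) (w, true)) =
      prob p (fun ω => Conn G ω (v, true) (w, true) ∧
          ¬ Conn G ω (v, false) (v, true) ∧ ¬ Conn G ω (w, true) (w, false)) +
        prob p (fun ω => Conn G ω (v, false) (w, false) ∧
          ¬ Conn G ω (v, true) (v, false) ∧ ¬ Conn G ω (w, false) (w, true)) -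
        prob p (fun ω => Conn G ω (v, true) (w, false) ∧
          ¬ Conn G ω (v, false) (v, true) ∧ ¬ Conn G ω (w, false) (w, true)) -
        prob p (fun ω => Conn G ω (v, false) (w, true) ∧
          ¬ Conn G ω (v, true) (v, false) ∧ ¬ Conn G ω (w, true) (w, false)) :=
  signed_sum_decomposition_general G p v w
end

section
/- Let C_i be a cluster of the percolation configuration restricted to the bunkbed graph minus the vertices w₊, w₋, and suppose u₋ ∈ C_i. Let p_{j±} := P(w_± ∼ C_j), where w' ∼ C_j means some edge from w' to C_j is open, and assume the events {w_± ∼ C_j} over all j and signs are independent. Then P(u₋ ↔ w₋ and w₋ ̸↔ w₊ | cluster structure) = p_{i-}(1 − p_{i+}) ∏_{j≠i} (1 − p_{j-}p_{j+}). -/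
/-!
The event is an intersection of one constraint per cluster on the attachment pattern
`(w₊ ∼ C_j, w₋ ∼ C_j)`: for `C_i` the pattern must be `(false, true)`, for every other cluster it
must not be `(true, true)`. By independence the sum over all patterns factorizes into a product
over clusters of the probability of the allowed patterns, `p_{i-}(1 - p_{i+})` for `C_i` and
`1 - p_{j-} p_{j+}` for `j ≠ i`.
-/

open Finset

theorem sum_ite_forall_prod_eq_prod_sum_filter {I κ R : Type*} [Fintype I] [DecidableEq I]
    [Fintype κ] [CommSemiring R] (P : I → κ → Prop) [∀ j, DecidablePred (P j)]
    (f : I → κ → R) :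
    (∑ η : I → κ, if ∀ j, P j (η j) then ∏ j, f j (η j) else 0) =
      ∏ j, ∑ a with P j a, f j a := by
  simp_rw [sum_filter, Fintype.prod_sum, Fintype.prod_ite_zero]

def pairWeight (p q : ℝ) (a : Bool × Bool) : ℝ :=
  (if a.1 then p else 1 - p) * (if a.2 then q else 1 - q)

theorem sum_pairWeight_not_both (p q : ℝ) :
    ∑ a with ¬(a.1 = true ∧ a.2 = true), pairWeight p q a = 1 - q * p := by
  rw [sum_filter, Fintype.sum_prod_type]
  simp only [Fintype.sum_bool, pairWeight, reduceIte, Bool.false_eq_true, and_self, and_false,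
    false_and, not_true, not_false_eq_true]
  ring

theorem sum_pairWeight_eq_false_true (p q : ℝ) :
    ∑ a with a = (false, true), pairWeight p q a = q * (1 - p) := by
  simp [filter_eq', pairWeight, mul_comm]

open Classical in
theorem cluster_connection_prob_general {I : Type*} [Fintype I] [DecidableEq I]
    (pp pm : I → ℝ) (i : I) :
    (∑ η : I → Bool × Bool,
      if ((η i).2 = true ∧ (η i).1 = false ∧
          ∀ j, j ≠ i → ¬((η j).1 = true ∧ (η j).2 = true)) then
        ∏ j, ((if (η j).1 then pp j else 1 - pp j) * (if (η j).2 then pm j else 1 - pm j))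
      else 0) =
    pm i * (1 - pp i) * ∏ j ∈ Finset.univ.erase i, (1 - pm j * pp j) := by
  let allowed : I → Bool × Bool → Prop := fun j a =>
    if j = i then a = (false, true) else ¬(a.1 = true ∧ a.2 = true)
  have event_eq : ∀ η : I → Bool × Bool, ((η i).2 = true ∧ (η i).1 = false ∧
      ∀ j, j ≠ i → ¬((η j).1 = true ∧ (η j).2 = true)) ↔ ∀ j, allowed j (η j) := by
    intro η
    constructor
    · rintro ⟨h2, h1, hne⟩ j
      by_cases hj : j = i
      · subst hj; simp [allowed, Prod.ext_iff, h1, h2]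
      · simpa [allowed, hj] using hne j hj
    · intro h
      have hi := h i
      simp only [allowed, if_pos rfl, Prod.ext_iff] at hi
      exact ⟨hi.2, hi.1, fun j hj => by simpa [allowed, hj] using h j⟩
  simp_rw [event_eq]
  refine (sum_ite_forall_prod_eq_prod_sum_filter allowed
    (fun j => pairWeight (pp j) (pm j))).trans ?_
  rw [← mul_prod_erase _ _ (mem_univ i)]
  congr 1
  · simp only [allowed, if_pos rfl, sum_pairWeight_eq_false_true]
  · refine prod_congr rfl fun j hj => ?_
    simp only [allowed, if_neg (ne_of_mem_erase hj), sum_pairWeight_not_both]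

open Classical in
/-- conditional probability of `{u₋ ↔ w₋, w₋ ̸↔ w₊}` given the cluster
structure, where for each cluster `j` the attachments of `w₊` (first component) and
`w₋` (second component) are independent with probabilities `pp j` and `pm j`. -/
theorem cluster_connection_prob {I : Type*} [Fintype I] [DecidableEq I]
    (pp pm : I → ℝ) (hpp : ∀ j, pp j ∈ Set.Icc (0:ℝ) 1)
    (hpm : ∀ j, pm j ∈ Set.Icc (0:ℝ) 1) (i : I) :
    (∑ η : I → Bool × Bool,
      if ((η i).2 = true ∧ (η i).1 = false ∧
          ∀ j, j ≠ i → ¬((η j).1 = true ∧ (η j).2 = true)) then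
        ∏ j, ((if (η j).1 then pp j else 1 - pp j) * (if (η j).2 then pm j else 1 - pm j))
      else 0) =
    pm i * (1 - pp i) * ∏ j ∈ Finset.univ.erase i, (1 - pm j * pp j) :=
  cluster_connection_prob_general pp pm i
end
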